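/- Let d_S = 2 and let the utility u with u(0) = 0 be 'incoherent', i.e. Z = u((ε₂ − ε₁)/2) − u(−(ε₂ − ε₁)/2) = 0. Then for q = 1/2 and any qubit density matrix ρ_S with ground-state population p = ⟨ε₁|ρ_S|ε₁⟩, the optimal expected utility equals 𝓤(ρ_S) = max(0, X − pY), where X = u(ε₂ − ε₁) and Y = u(ε₂ − ε₁) − u(−(ε₂ − ε₁)); in particular 𝓤(ρ_S) = 𝓤(Δ(ρ_S)) where Δ is the dephasing in the energy eigenbasis. -/

import Mathlib

open Matrix BigOperators Finset Kronecker
open scoped ComplexOrder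

noncomputable section

namespace Daemonic

/-- The outer product `|x⟩⟨y|` as a matrix. -/
def ketbra {ι : Type*} [Fintype ι] (x y : ι → ℂ) : Matrix ι ι ℂ :=
  Matrix.vecMulVec x (star y)

/-- A family of vectors is orthonormal. -/
def ONFam {ι κ : Type*} [Fintype ι] [DecidableEq κ] (v : κ → ι → ℂ) : Prop :=
  ∀ i j, star (v i) ⬝ᵥ v j = if i = j then 1 else 0

/-- A density matrix: positive semidefinite with unit trace. -/
def IsDensity {ι : Type*} [Fintype ι] (ρ : Matrix ι ι ℂ) : Prop :=
  ρ.PosSemidef ∧ ρ.trace = 1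

/-- The matrix element `⟨x|M|y⟩`. -/
def matElem {ι : Type*} [Fintype ι] (M : Matrix ι ι ℂ) (x y : ι → ℂ) : ℂ :=
  star x ⬝ᵥ (M *ᵥ y)

/-- The Hamiltonian `H_S = ∑ₖ εₖ |εₖ⟩⟨εₖ|`. -/
def ham {n : ℕ} (ε : Fin n → ℝ) (v : Fin n → Fin n → ℂ) : Matrix (Fin n) (Fin n) ℂ :=
  ∑ k, (ε k : ℂ) • ketbra (v k) (v k)

/-- `e^{t H_S} = ∑ₖ e^{t εₖ} |εₖ⟩⟨εₖ|` (functional calculus in the eigenbasis of `H_S`). -/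
def expHam {n : ℕ} (ε : Fin n → ℝ) (v : Fin n → Fin n → ℂ) (t : ℝ) :
    Matrix (Fin n) (Fin n) ℂ :=
  ∑ k, (Real.exp (t * ε k) : ℂ) • ketbra (v k) (v k)

/-- The expected utility `⟨u(w)⟩_{ρ,U}` for quasiprobability parameter `q`,
with respect to the eigenvalues `ε` and orthonormal eigenvectors `v` of `H_S`. -/
def expUtil {n : ℕ} (u : ℝ → ℝ) (q : ℝ) (ε : Fin n → ℝ) (v : Fin n → Fin n → ℂ)
    (ρ U : Matrix (Fin n) (Fin n) ℂ) : ℝ :=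
  ∑ i, ∑ j, ∑ k,
    (matElem ρ (v i) (v j) * matElem Uᴴ (v j) (v k) * matElem U (v k) (v i)).re *
      u (q * ε i + (1 - q) * ε j - ε k)

/-- The optimal expected utility `𝓤(ρ) = max over unitaries U of ⟨u(w)⟩_{ρ,U}`. -/
def optUtil {n : ℕ} (u : ℝ → ℝ) (q : ℝ) (ε : Fin n → ℝ) (v : Fin n → Fin n → ℂ)
    (ρ : Matrix (Fin n) (Fin n) ℂ) : ℝ :=
  ⨆ U : Matrix.unitaryGroup (Fin n) ℂ, expUtil u q ε v ρ (U : Matrix (Fin n) (Fin n) ℂ)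

/-- The exponential utility `u(w) = (1 - e^{-r w})/r`. -/
def expUtility (r : ℝ) : ℝ → ℝ := fun w => (1 - Real.exp (-r * w)) / r

/-- The partial trace over the ancilla. -/
def ptraceA {dS dA : ℕ} (ρSA : Matrix (Fin dS × Fin dA) (Fin dS × Fin dA) ℂ) :
    Matrix (Fin dS) (Fin dS) ℂ :=
  Matrix.of fun i j => ∑ a, ρSA (i, a) (j, a)

/-- The unnormalized conditional state `Tr_A((I ⊗ Π_a) ρ_SA (I ⊗ Π_a))`, where
`Π_a = |a⟩⟨a|` projects onto the vector `w a` of an orthonormal basis `w` of the ancilla. -/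
def condUnnorm {dS dA : ℕ} (w : Fin dA → Fin dA → ℂ)
    (ρSA : Matrix (Fin dS × Fin dA) (Fin dS × Fin dA) ℂ) (a : Fin dA) :
    Matrix (Fin dS) (Fin dS) ℂ :=
  Matrix.of fun i j => ∑ c, ∑ d, ρSA (i, c) (j, d) * (w a d * star (w a c))

/-- The outcome probability `p_a = Tr((I ⊗ Π_a) ρ_SA)`. -/
def prob {dS dA : ℕ} (w : Fin dA → Fin dA → ℂ)
    (ρSA : Matrix (Fin dS × Fin dA) (Fin dS × Fin dA) ℂ) (a : Fin dA) : ℝ :=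
  ((condUnnorm w ρSA a).trace).re

/-- The conditional state `ρ_{S|a}`. -/
def condState {dS dA : ℕ} (w : Fin dA → Fin dA → ℂ)
    (ρSA : Matrix (Fin dS × Fin dA) (Fin dS × Fin dA) ℂ) (a : Fin dA) :
    Matrix (Fin dS) (Fin dS) ℂ :=
  ((prob w ρSA a : ℂ))⁻¹ • condUnnorm w ρSA a

/-- The daemonic expected utility `𝓤_{{Π_a}}(ρ_SA) = ∑_a p_a 𝓤(ρ_{S|a})`. -/
def daemonicUtil {dS dA : ℕ} (u : ℝ → ℝ) (q : ℝ) (ε : Fin dS → ℝ)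
    (v : Fin dS → Fin dS → ℂ) (w : Fin dA → Fin dA → ℂ)
    (ρSA : Matrix (Fin dS × Fin dA) (Fin dS × Fin dA) ℂ) : ℝ :=
  ∑ a, prob w ρSA a * optUtil u q ε v (condState w ρSA a)

/-- The maximum daemonic gain `δ𝓤(ρ_SA)`, maximizing over all orthonormal bases of the
ancilla (equivalently, over the rows of all unitary matrices). -/
def daemonicGain {dS dA : ℕ} (u : ℝ → ℝ) (q : ℝ) (ε : Fin dS → ℝ)
    (v : Fin dS → Fin dS → ℂ)
    (ρSA : Matrix (Fin dS × Fin dA) (Fin dS × Fin dA) ℂ) : ℝ :=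
  (⨆ V : Matrix.unitaryGroup (Fin dA) ℂ,
      daemonicUtil u q ε v (fun a => (V : Matrix (Fin dA) (Fin dA) ℂ) a) ρSA) -
    optUtil u q ε v (ptraceA ρSA)

/-- The ergotropy of a (possibly unnormalized) state `σ` with respect to a Hamiltonian `H`:
`ℰ_H(σ) = max over unitaries U of (Tr(Hσ) - Tr(H U σ U†))`. -/
def ergotropyH {n : ℕ} (H σ : Matrix (Fin n) (Fin n) ℂ) : ℝ :=
  ⨆ U : Matrix.unitaryGroup (Fin n) ℂ,
    ((H * σ).trace -
      (H * ((U : Matrix (Fin n) (Fin n) ℂ) * σ * (U : Matrix (Fin n) (Fin n) ℂ)ᴴ)).trace).re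

/-- A separable bipartite state: a convex combination of product states. -/
def IsSeparable {dS dA : ℕ} (ρSA : Matrix (Fin dS × Fin dA) (Fin dS × Fin dA) ℂ) : Prop :=
  ∃ (m : ℕ) (p : Fin m → ℝ) (σ : Fin m → Matrix (Fin dS) (Fin dS) ℂ)
    (τ : Fin m → Matrix (Fin dA) (Fin dA) ℂ),
    (∀ k, 0 ≤ p k) ∧ (∑ k, p k = 1) ∧ (∀ k, IsDensity (σ k)) ∧ (∀ k, IsDensity (τ k)) ∧
    ρSA = ∑ k, (p k : ℂ) • (σ k ⊗ₖ τ k)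

/-- A classical-quantum state `ρ_SA = ∑ₖ pₖ Pₖ ⊗ ρᴬₖ` with `Pₖ` mutually orthogonal
rank-one projectors summing to the identity. -/
def IsClassicalQuantum {dS dA : ℕ}
    (ρSA : Matrix (Fin dS × Fin dA) (Fin dS × Fin dA) ℂ) : Prop :=
  ∃ (p : Fin dS → ℝ) (ψ : Fin dS → Fin dS → ℂ) (τ : Fin dS → Matrix (Fin dA) (Fin dA) ℂ),
    (∀ k, 0 ≤ p k) ∧ (∑ k, p k = 1) ∧ ONFam ψ ∧ (∀ k, IsDensity (τ k)) ∧
    ρSA = ∑ k, (p k : ℂ) • (ketbra (ψ k) (ψ k) ⊗ₖ τ k)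

/-- The dephasing map associated with an orthonormal basis `v`. -/
def dephase {n : ℕ} (v : Fin n → Fin n → ℂ) (ρ : Matrix (Fin n) (Fin n) ℂ) :
    Matrix (Fin n) (Fin n) ℂ :=
  ∑ k, ketbra (v k) (v k) * ρ * ketbra (v k) (v k)

/-!
In the energy eigenbasis write `R` and `B` for the matrices of `ρ` and `U`, and `ω = ε 1 - ε 0`.
For `q = 1/2` the coherent terms (`i ≠ j`) have work `±ω/2`, where `u` takes a single value `z`
since `Z = 0`; so they add up to `z` times off-diagonal entries of `B†B = 1`, i.e. to zero.
As `u 0 = 0` and `|B 0 1| = |B 1 0|` for a `2 × 2` unitary, what is left is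
`|B 1 0|² (p u(-ω) + (1 - p) u ω) = |B 1 0|² (X - pY)`. Here `|B 1 0|² ∈ [0, 1]`, with both ends
attained (by the identity and by the swap of the eigenvectors), so the maximum is `max(0, X - pY)`.
The value only sees the diagonal of `R`, which dephasing does not change.
-/

section Basis

variable {ι : Type*} [Fintype ι]

def ofCols (v : ι → ι → ℂ) : Matrix ι ι ℂ := (Matrix.of v)ᵀ

def inBasis (v : ι → ι → ℂ) (M : Matrix ι ι ℂ) : Matrix ι ι ℂ := star (ofCols v) * M * ofCols v

lemma matElem_conjTranspose (M : Matrix ι ι ℂ) (x y : ι → ℂ) :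
    matElem Mᴴ x y = star (matElem M y x) := by
  simp only [matElem, dotProduct, mulVec, conjTranspose_apply, Pi.star_apply, star_sum,
    star_mul', star_star, Finset.mul_sum]
  rw [Finset.sum_comm]
  exact Finset.sum_congr rfl fun _ _ => Finset.sum_congr rfl fun _ _ => by ring

lemma matElem_eq_inBasis (M : Matrix ι ι ℂ) (v : ι → ι → ℂ) (a b : ι) :
    matElem M (v a) (v b) = inBasis v M a b := by
  simp only [matElem, inBasis, dotProduct, mulVec, Matrix.mul_apply, star_apply, ofCols,
    transpose_apply, of_apply, Pi.star_apply, Finset.mul_sum, Finset.sum_mul]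
  rw [Finset.sum_comm]
  exact Finset.sum_congr rfl fun _ _ => Finset.sum_congr rfl fun _ _ => by ring

lemma matElem_sum {κ : Type*} (s : Finset κ) (M : κ → Matrix ι ι ℂ) (x y : ι → ℂ) :
    matElem (∑ k ∈ s, M k) x y = ∑ k ∈ s, matElem (M k) x y := by
  simp only [matElem, sum_mulVec, dotProduct_sum]

lemma matElem_ketbra_mul_mul_ketbra (M : Matrix ι ι ℂ) (a b c d x y : ι → ℂ) :
    matElem (ketbra a b * M * ketbra c d) x y
      = (star x ⬝ᵥ a) * matElem M b c * (star d ⬝ᵥ y) := by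
  simp only [matElem, ketbra, ← mulVec_mulVec, vecMulVec_mulVec, mulVec_smul, dotProduct_smul,
    MulOpposite.smul_eq_mul_unop, MulOpposite.unop_op]

variable [DecidableEq ι] {v : ι → ι → ℂ}

lemma ONFam.ofCols_mem_unitaryGroup (hv : ONFam v) : ofCols v ∈ unitaryGroup ι ℂ := by
  rw [mem_unitaryGroup_iff']
  ext a b
  simpa [Matrix.mul_apply, ofCols, one_apply, dotProduct] using hv a b

lemma ONFam.inBasis_mem_unitaryGroup (hv : ONFam v) {U : Matrix ι ι ℂ}
    (hU : U ∈ unitaryGroup ι ℂ) : inBasis v U ∈ unitaryGroup ι ℂ :=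
  mul_mem (mul_mem (Unitary.star_mem hv.ofCols_mem_unitaryGroup) hU) hv.ofCols_mem_unitaryGroup

lemma ONFam.inBasis_one (hv : ONFam v) : inBasis v 1 = 1 := by
  rw [inBasis, Matrix.mul_one, mem_unitaryGroup_iff'.mp hv.ofCols_mem_unitaryGroup]

lemma ONFam.inBasis_ofCols_mul_mul_star (hv : ONFam v) (A : Matrix ι ι ℂ) :
    inBasis v (ofCols v * A * star (ofCols v)) = A := by
  have hT := mem_unitaryGroup_iff'.mp hv.ofCols_mem_unitaryGroup
  simp only [inBasis, ← Matrix.mul_assoc, hT, Matrix.one_mul]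
  rw [Matrix.mul_assoc, hT, Matrix.mul_one]

lemma ONFam.sum_matElem_eq_trace (hv : ONFam v) (M : Matrix ι ι ℂ) :
    ∑ k, matElem M (v k) (v k) = M.trace := by
  simp only [matElem_eq_inBasis]
  change (star (ofCols v) * M * ofCols v).trace = M.trace
  rw [trace_mul_cycle, mem_unitaryGroup_iff.mp hv.ofCols_mem_unitaryGroup, Matrix.one_mul]

end Basis

lemma ONFam.matElem_dephase {n : ℕ} {v : Fin n → Fin n → ℂ} (hv : ONFam v)
    (ρ : Matrix (Fin n) (Fin n) ℂ) (i : Fin n) :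
    matElem (dephase v ρ) (v i) (v i) = matElem ρ (v i) (v i) := by
  unfold ONFam at hv
  simp [dephase, matElem_sum, matElem_ketbra_mul_mul_ketbra, hv]

lemma expUtil_eq_sum_inBasis {n : ℕ} (u : ℝ → ℝ) (q : ℝ) (ε : Fin n → ℝ)
    (v : Fin n → Fin n → ℂ) (ρ U : Matrix (Fin n) (Fin n) ℂ) :
    expUtil u q ε v ρ U = ∑ i, ∑ j, ∑ k,
      (inBasis v ρ i j * star (inBasis v U k j) * inBasis v U k i).re *
        u (q * ε i + (1 - q) * ε j - ε k) := by
  simp only [expUtil, matElem_conjTranspose]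
  simp only [matElem_eq_inBasis]

lemma normSq_apply_zero_one_of_mem_unitaryGroup {B : Matrix (Fin 2) (Fin 2) ℂ}
    (hB : B ∈ unitaryGroup (Fin 2) ℂ) : Complex.normSq (B 0 1) = Complex.normSq (B 1 0) := by
  have hcol := congrFun (congrFun (mem_unitaryGroup_iff'.mp hB) 0) 0
  have hrow := congrFun (congrFun (mem_unitaryGroup_iff.mp hB) 0) 0
  simp only [Matrix.mul_apply, star_apply, RCLike.star_def, Fin.sum_univ_two, one_apply_eq]
    at hcol hrow
  apply Complex.ofReal_injective
  rw [Complex.normSq_eq_conj_mul_self, Complex.normSq_eq_conj_mul_self]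
  linear_combination hrow - hcol

lemma expUtil_half_eq_of_incoherent {v : Fin 2 → Fin 2 → ℂ} (hv : ONFam v) {u : ℝ → ℝ}
    (hu0 : u 0 = 0) {ε : Fin 2 → ℝ} (hZ : u ((ε 1 - ε 0) / 2) - u (-((ε 1 - ε 0) / 2)) = 0)
    (ρ : Matrix (Fin 2) (Fin 2) ℂ) {U : Matrix (Fin 2) (Fin 2) ℂ}
    (hU : U ∈ unitaryGroup (Fin 2) ℂ) :
    expUtil u (1/2) ε v ρ U = Complex.normSq (inBasis v U 1 0) *
      ((matElem ρ (v 0) (v 0)).re * u (ε 0 - ε 1) +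
        (matElem ρ (v 1) (v 1)).re * u (ε 1 - ε 0)) := by
  rw [expUtil_eq_sum_inBasis, matElem_eq_inBasis, matElem_eq_inBasis]
  set R := inBasis v ρ
  set B := inBasis v U
  have hB : B ∈ unitaryGroup (Fin 2) ℂ := hv.inBasis_mem_unitaryGroup hU
  have hBB := mem_unitaryGroup_iff'.mp hB
  have horth₁ : star (B 0 1) * B 0 0 + star (B 1 1) * B 1 0 = 0 := by
    simpa [Matrix.mul_apply, Fin.sum_univ_two] using congrFun (congrFun hBB 1) 0
  have horth₂ : star (B 0 0) * B 0 1 + star (B 1 0) * B 1 1 = 0 := by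
    simpa [Matrix.mul_apply, Fin.sum_univ_two] using congrFun (congrFun hBB 0) 1
  have hnorm := congrArg Complex.ofReal (normSq_apply_zero_one_of_mem_unitaryGroup hB)
  rw [Complex.normSq_eq_conj_mul_self, Complex.normSq_eq_conj_mul_self] at hnorm
  set z := u ((ε 1 - ε 0) / 2)
  have hdiag : ∀ i k : Fin 2, 1 / 2 * ε i + (1 - 1 / 2) * ε i - ε k = ε i - ε k :=
    fun _ _ => by ring
  have hz₁ : u (1 / 2 * ε 0 + (1 - 1 / 2) * ε 1 - ε 0) = z := congrArg u (by ring)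
  have hz₂ : u (1 / 2 * ε 1 + (1 - 1 / 2) * ε 0 - ε 0) = z := congrArg u (by ring)
  have hz₃ : u (1 / 2 * ε 0 + (1 - 1 / 2) * ε 1 - ε 1) = z := by
    rw [sub_eq_zero.mp hZ]; exact congrArg u (by ring)
  have hz₄ : u (1 / 2 * ε 1 + (1 - 1 / 2) * ε 0 - ε 1) = z := by
    rw [sub_eq_zero.mp hZ]; exact congrArg u (by ring)
  have hre : ∀ (w : ℂ) (c : ℝ), w.re * c = (w * c).re := fun w c => by simp
  simp only [Fin.sum_univ_two, hdiag, hz₁, hz₂, hz₃, hz₄, sub_self, hu0, hre, ← Complex.add_re,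
    ← Complex.re_ofReal_mul]
  congr 1
  simp only [Complex.star_def, Complex.ofReal_zero, mul_zero, zero_add, add_zero] at horth₁ horth₂ ⊢
  rw [Complex.normSq_eq_conj_mul_self]
  linear_combination R 0 1 * z * horth₁ + R 1 0 * z * horth₂ + R 1 1 * u (ε 1 - ε 0) * hnorm

lemma isGreatest_max_zero_of_eq_mul {α : Type*} {s : Set α} {f g : α → ℝ} {c : ℝ}
    (hf : ∀ a ∈ s, f a = g a * c) (hg : ∀ a ∈ s, g a ∈ Set.Icc 0 1)
    (h₀ : ∃ a ∈ s, g a = 0) (h₁ : ∃ a ∈ s, g a = 1) :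
    IsGreatest {x | ∃ a ∈ s, x = f a} (max 0 c) := by
  refine ⟨?_, ?_⟩
  · rcases le_total c 0 with hc | hc
    · obtain ⟨a, ha, hga⟩ := h₀
      exact ⟨a, ha, by rw [hf a ha, hga, zero_mul, max_eq_left hc]⟩
    · obtain ⟨a, ha, hga⟩ := h₁
      exact ⟨a, ha, by rw [hf a ha, hga, one_mul, max_eq_right hc]⟩
  · rintro x ⟨a, ha, rfl⟩
    obtain ⟨hg₀, hg₁⟩ := hg a ha
    rw [hf a ha]
    rcases le_total c 0 with hc | hc
    · exact le_max_of_le_left (mul_nonpos_of_nonneg_of_nonpos hg₀ hc)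
    · exact le_max_of_le_right (mul_le_of_le_one_left hc hg₁)

lemma swap_mem_unitaryGroup : !![(0 : ℂ), 1; 1, 0] ∈ unitaryGroup (Fin 2) ℂ := by
  rw [mem_unitaryGroup_iff']
  ext i j
  fin_cases i <;> fin_cases j <;> simp [Matrix.mul_apply]

theorem stmt12_general (u : ℝ → ℝ) (hu0 : u 0 = 0)
    (ε : Fin 2 → ℝ)
    (v : Fin 2 → Fin 2 → ℂ) (hv : ONFam v)
    (hZ : u ((ε 1 - ε 0)/2) - u (-((ε 1 - ε 0)/2)) = 0)
    (ρ : Matrix (Fin 2) (Fin 2) ℂ) (hρ : IsDensity ρ)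
    (p : ℝ) (hp : matElem ρ (v 0) (v 0) = (p : ℂ)) :
    IsGreatest {x : ℝ | ∃ U ∈ Matrix.unitaryGroup (Fin 2) ℂ, x = expUtil u (1/2) ε v ρ U}
      (max 0 (u (ε 1 - ε 0) - p * (u (ε 1 - ε 0) - u (-(ε 1 - ε 0))))) ∧
    optUtil u (1/2) ε v ρ = optUtil u (1/2) ε v (dephase v ρ) := by
  have hT := hv.ofCols_mem_unitaryGroup
  have hp₁ : (matElem ρ (v 1) (v 1)).re = 1 - p := by
    have htr := hv.sum_matElem_eq_trace ρ
    rw [Fin.sum_univ_two, hρ.2, hp, ← eq_sub_iff_add_eq'] at htr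
    simp [htr]
  refine ⟨isGreatest_max_zero_of_eq_mul (g := fun U => Complex.normSq (inBasis v U 1 0))
    (fun U hU => ?_) (fun U hU => ?_) ⟨1, one_mem _, by simp [hv.inBasis_one]⟩
    ⟨ofCols v * !![0, 1; 1, 0] * star (ofCols v),
      mul_mem (mul_mem hT swap_mem_unitaryGroup) (Unitary.star_mem hT),
      by simp [hv.inBasis_ofCols_mul_mul_star]⟩, ?_⟩
  · rw [expUtil_half_eq_of_incoherent hv hu0 hZ ρ hU, hp, hp₁, neg_sub, Complex.ofReal_re]
    ring
  · rw [Complex.normSq_eq_norm_sq]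
    exact ⟨by positivity, pow_le_one₀ (norm_nonneg _)
      (entry_norm_bound_of_unitary (hv.inBasis_mem_unitaryGroup hU) 1 0)⟩
  · refine iSup_congr fun U => ?_
    rw [expUtil_half_eq_of_incoherent hv hu0 hZ ρ U.2,
      expUtil_half_eq_of_incoherent hv hu0 hZ _ U.2, hv.matElem_dephase, hv.matElem_dephase]

/-- for a qubit, `q = 1/2` and an incoherent utility (`Z = 0`), the optimal
expected utility is `max(0, X - pY)` with `p = ⟨ε₁|ρ|ε₁⟩`; in particular `𝓤(ρ) = 𝓤(Δ(ρ))`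
where `Δ` is the dephasing in the energy eigenbasis. -/
theorem stmt12 (u : ℝ → ℝ) (hu0 : u 0 = 0)
    (ε : Fin 2 → ℝ) (hε : ε 0 < ε 1)
    (v : Fin 2 → Fin 2 → ℂ) (hv : ONFam v)
    (hZ : u ((ε 1 - ε 0)/2) - u (-((ε 1 - ε 0)/2)) = 0)
    (ρ : Matrix (Fin 2) (Fin 2) ℂ) (hρ : IsDensity ρ)
    (p : ℝ) (hp : matElem ρ (v 0) (v 0) = (p : ℂ)) :
    IsGreatest {x : ℝ | ∃ U ∈ Matrix.unitaryGroup (Fin 2) ℂ, x = expUtil u (1/2) ε v ρ U}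
      (max 0 (u (ε 1 - ε 0) - p * (u (ε 1 - ε 0) - u (-(ε 1 - ε 0))))) ∧
    optUtil u (1/2) ε v ρ = optUtil u (1/2) ε v (dephase v ρ) :=
  stmt12_general u hu0 ε v hv hZ ρ hρ p hp

end Daemonic
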